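/- For every Markov process with rates (q_{ij}) satisfying the balance condition with positive equilibrium P*, and for every distribution P ≠ P*, there exists a Markov process (q'_{ij}) satisfying detailed balance with the same equilibrium P* such that, for every convex differentiable function h, the time derivative of H_h(P‖P*) = ∑_i p*_i h(p_i/p*_i) at P under the first process equals the time derivative of H_h(P‖P*) at P under the second. -/

import Mathlib

/-!
Write `x i = p i / p* i`. Under the balance condition the velocity of the master equation at `P`
is the flux `v i = ∑ j, u i j * (x j - x i)` of the circulation `u i j = q i j * p* j`, and the net
flux into every sublevel set `{x ≤ t}` is nonnegative. The derivative `∑ i, h' (x i) * v i` sees `v`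
only through its sums over the level sets of `x`. Sort the states by `x` and join consecutive ones by
a symmetric bond whose weight is the flux into the first `k + 1` states (a sublevel set whenever
the gap is positive) divided by the gap in `x`: by summation by parts, this detailed-balance process
produces the same derivative.
-/

open Finset

section Flux

variable {ι : Type*} [Fintype ι]

def flux (w : ι → ι → ℝ) (x : ι → ℝ) (i : ι) : ℝ := ∑ j, w i j * (x j - x i)

theorem sum_flux_eq_zero {u : ι → ι → ℝ} (hcirc : ∀ i, ∑ j, u i j = ∑ j, u j i) (x : ι → ℝ) :
    ∑ i, flux u x i = 0 := by
  simp only [flux, mul_sub, sum_sub_distrib, ← sum_mul]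
  rw [sum_comm]
  simp only [← sum_mul, hcirc, sub_self]

theorem sum_filter_le_flux_nonneg {u : ι → ι → ℝ} (hu : ∀ i j, i ≠ j → 0 ≤ u i j)
    (hcirc : ∀ i, ∑ j, u i j = ∑ j, u j i) (x : ι → ℝ) (t : ℝ) :
    0 ≤ ∑ i ∈ univ.filter (x · ≤ t), flux u x i := by
  -- Truncating `x` at `t` can only lower the flux into `{x ≤ t}`, and makes the flux into
  -- `{x > t}` nonpositive; the truncated fluxes still sum to zero.
  set m : ι → ℝ := fun i => min (x i) t
  have hm : ∀ i, flux u m i ≤ if x i ≤ t then flux u x i else 0 := by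
    intro i
    split_ifs with hi
    · refine sum_le_sum fun j _ => ?_
      rcases eq_or_ne i j with rfl | hij
      · simp
      · exact mul_le_mul_of_nonneg_left (by simp [m, hi]) (hu i j hij)
    · refine sum_nonpos fun j _ => ?_
      rcases eq_or_ne i j with rfl | hij
      · simp
      · exact mul_nonpos_of_nonneg_of_nonpos (hu i j hij) (by simp [m, (not_le.1 hi).le])
  calc (0 : ℝ) = ∑ i, flux u m i := (sum_flux_eq_zero hcirc m).symm
    _ ≤ ∑ i, if x i ≤ t then flux u x i else 0 := sum_le_sum fun i _ => hm i
    _ = _ := (sum_filter _ _).symm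

theorem sum_mul_flux_sum {κ : Type*} (s : Finset κ) (W : κ → ι → ι → ℝ) (f x : ι → ℝ) :
    ∑ i, f i * flux (fun i j => ∑ k ∈ s, W k i j) x i = ∑ k ∈ s, ∑ i, f i * flux (W k) x i := by
  simp only [flux, sum_mul, mul_sum]
  conv_rhs => rw [sum_comm]
  exact sum_congr rfl fun i _ => sum_comm

theorem flux_single [DecidableEq ι] (a b : ι) (c : ℝ) (x : ι → ℝ) (i : ι) :
    flux (Matrix.single a b c) x i = if i = a then c * (x b - x a) else 0 := by
  by_cases h : i = a
  · subst h; simp [flux, Matrix.single_apply]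
  · simp [flux, Ne.symm h, h]

theorem sum_mul_flux_single_add_single [DecidableEq ι] (a b : ι) (c : ℝ) (f x : ι → ℝ) :
    ∑ i, f i * flux (Matrix.single a b c + Matrix.single b a c) x i =
      c * (f a - f b) * (x b - x a) := by
  have hadd : flux (Matrix.single a b c + Matrix.single b a c) x =
      flux (Matrix.single a b c) x + flux (Matrix.single b a c) x := by
    ext i; simp [flux, add_mul, sum_add_distrib]
  simp only [hadd, Pi.add_apply, flux_single, mul_add, sum_add_distrib, mul_ite, mul_zero,
    sum_ite_eq', mem_univ, if_true]
  ring

theorem flux_comp_equiv {κ : Type*} [Fintype κ] (e : ι ≃ κ) (w : κ → κ → ℝ) (x : κ → ℝ)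
    (i : ι) : flux (fun i j => w (e i) (e j)) (x ∘ e) i = flux w x (e i) :=
  e.sum_comp fun b => w (e i) b * (x b - x (e i))

end Flux

theorem sum_range_by_parts_of_sum_eq_zero {R : Type*} [CommRing R] (g v : ℕ → R) (m : ℕ)
    (hv : ∑ k ∈ range m, v k = 0) :
    ∑ k ∈ range m, g k * v k =
      ∑ k ∈ range (m - 1), (g k - g (k + 1)) * ∑ l ∈ range (k + 1), v l := by
  have := sum_range_by_parts g v m
  simp only [smul_eq_mul, hv, mul_zero, zero_sub] at this
  rw [this, ← sum_neg_distrib]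
  exact sum_congr rfl fun k _ => by ring

section SortedStates

open Fin.NatCast

variable {N : ℕ} (x : Fin (N + 1) → ℝ)

-- The argument `k` is read modulo `N + 1`.
noncomputable def sortedState (k : ℕ) : Fin (N + 1) := Tuple.sort x (k : Fin (N + 1))

theorem sum_eq_sum_range_sortedState (F : Fin (N + 1) → ℝ) :
    ∑ i, F i = ∑ k ∈ range (N + 1), F (sortedState x k) := by
  rw [← Equiv.sum_comp (Tuple.sort x), ← Fin.sum_univ_eq_sum_range]
  simp only [sortedState, Fin.cast_val_eq_self]

theorem sortedState_le_sortedState {k l : ℕ} (hkl : k ≤ l) (hl : l ≤ N) :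
    x (sortedState x k) ≤ x (sortedState x l) :=
  Tuple.monotone_sort x ((Fin.natCast_le_natCast (hkl.trans hl) hl).2 hkl)

theorem sum_range_sortedState_eq_sum_filter (v : Fin (N + 1) → ℝ) {k : ℕ} (hk : k < N)
    (hgap : x (sortedState x k) < x (sortedState x (k + 1))) :
    ∑ l ∈ range (k + 1), v (sortedState x l) =
      ∑ i ∈ univ.filter (x · ≤ x (sortedState x k)), v i := by
  rw [sum_filter, sum_eq_sum_range_sortedState x, ← sum_filter]
  congr 1
  ext l
  simp only [mem_range, mem_filter]
  constructor
  · intro hl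
    exact ⟨by omega, sortedState_le_sortedState x (by omega) (by omega)⟩
  · rintro ⟨hl, hle⟩
    by_contra! hkl
    exact (hgap.trans_le (sortedState_le_sortedState x hkl (by omega))).not_ge hle

variable (v : Fin (N + 1) → ℝ)

-- When the gap vanishes the weight is `0` (division by zero); such a bond joins two states with
-- the same value of `x` and is invisible to `∑ i, g (x i) * flux w x i`.
noncomputable def chainWeight (k : ℕ) : ℝ :=
  (∑ l ∈ range (k + 1), v (sortedState x l)) / (x (sortedState x (k + 1)) - x (sortedState x k))

noncomputable def chainGenerator (i j : Fin (N + 1)) : ℝ :=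
  ∑ k ∈ range N, (Matrix.single (sortedState x k) (sortedState x (k + 1)) (chainWeight x v k) i j +
    Matrix.single (sortedState x (k + 1)) (sortedState x k) (chainWeight x v k) i j)

theorem chainGenerator_symm (i j : Fin (N + 1)) :
    chainGenerator x v i j = chainGenerator x v j i := by
  refine sum_congr rfl fun k _ => ?_
  simp only [Matrix.single_apply]
  rw [add_comm]
  congr 1 <;> exact if_congr (by tauto) rfl rfl

theorem chainGenerator_nonneg (hcut : ∀ t, 0 ≤ ∑ i ∈ univ.filter (x · ≤ t), v i)
    (i j : Fin (N + 1)) : 0 ≤ chainGenerator x v i j := by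
  have hw : ∀ k ∈ range N, 0 ≤ chainWeight x v k := by
    intro k hk
    have hk : k < N := mem_range.1 hk
    rcases (sortedState_le_sortedState x (Nat.le_succ k) hk).eq_or_lt with heq | hlt
    · simp [chainWeight, heq]
    · rw [chainWeight, sum_range_sortedState_eq_sum_filter x v hk hlt]
      exact div_nonneg (hcut _) (sub_nonneg.2 hlt.le)
  refine sum_nonneg fun k hk => add_nonneg ?_ ?_ <;>
    simp only [Matrix.single_apply] <;> split_ifs <;> simp [hw k hk]

theorem chainWeight_mul_sub_mul_sub (g : ℝ → ℝ) (k : ℕ) :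
    chainWeight x v k * (g (x (sortedState x k)) - g (x (sortedState x (k + 1)))) *
        (x (sortedState x (k + 1)) - x (sortedState x k)) =
      (g (x (sortedState x k)) - g (x (sortedState x (k + 1)))) *
        ∑ l ∈ range (k + 1), v (sortedState x l) := by
  by_cases hgap : x (sortedState x (k + 1)) - x (sortedState x k) = 0
  · simp [sub_eq_zero.1 hgap]
  · rw [chainWeight]
    field_simp

theorem sum_mul_flux_chainGenerator (hv : ∑ i, v i = 0) (g : ℝ → ℝ) :
    ∑ i, g (x i) * flux (chainGenerator x v) x i = ∑ i, g (x i) * v i := by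
  have hv' : ∑ k ∈ range (N + 1), v (sortedState x k) = 0 := by
    rw [← sum_eq_sum_range_sortedState]; exact hv
  calc ∑ i, g (x i) * flux (chainGenerator x v) x i
      = ∑ k ∈ range N, chainWeight x v k * (g (x (sortedState x k)) -
          g (x (sortedState x (k + 1)))) * (x (sortedState x (k + 1)) - x (sortedState x k)) :=
        (sum_mul_flux_sum _ _ _ _).trans
          (sum_congr rfl fun k _ => sum_mul_flux_single_add_single _ _ _ _ _)
    _ = ∑ k ∈ range N, (g (x (sortedState x k)) - g (x (sortedState x (k + 1)))) *
          ∑ l ∈ range (k + 1), v (sortedState x l) :=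
        sum_congr rfl fun k _ => chainWeight_mul_sub_mul_sub x v g k
    _ = ∑ k ∈ range (N + 1), g (x (sortedState x k)) * v (sortedState x k) :=
        (sum_range_by_parts_of_sum_eq_zero _ _ _ hv').symm
    _ = ∑ i, g (x i) * v i := (sum_eq_sum_range_sortedState x fun i => g (x i) * v i).symm

end SortedStates

theorem exists_symmetric_flux_pairing_eq_fin {n : ℕ} (x v : Fin n → ℝ) (hv : ∑ i, v i = 0)
    (hcut : ∀ t, 0 ≤ ∑ i ∈ univ.filter (x · ≤ t), v i) :
    ∃ w : Fin n → Fin n → ℝ, (∀ i j, 0 ≤ w i j) ∧ (∀ i j, w i j = w j i) ∧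
      ∀ g : ℝ → ℝ, ∑ i, g (x i) * v i = ∑ i, g (x i) * flux w x i := by
  cases n with
  | zero => exact ⟨0, fun _ _ => le_rfl, fun _ _ => rfl, fun _ => by simp⟩
  | succ N =>
    exact ⟨chainGenerator x v, chainGenerator_nonneg x v hcut, chainGenerator_symm x v,
      fun g => (sum_mul_flux_chainGenerator x v hv g).symm⟩

theorem exists_symmetric_flux_pairing_eq {ι : Type*} [Fintype ι] (x v : ι → ℝ)
    (hv : ∑ i, v i = 0) (hcut : ∀ t, 0 ≤ ∑ i ∈ univ.filter (x · ≤ t), v i) :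
    ∃ w : ι → ι → ℝ, (∀ i j, 0 ≤ w i j) ∧ (∀ i j, w i j = w j i) ∧
      ∀ g : ℝ → ℝ, ∑ i, g (x i) * v i = ∑ i, g (x i) * flux w x i := by
  set e := Fintype.equivFin ι
  have hcut' : ∀ t, 0 ≤ ∑ a ∈ univ.filter ((x ∘ e.symm) · ≤ t), (v ∘ e.symm) a := fun t => by
    have := hcut t
    rw [sum_filter, ← e.symm.sum_comp] at this
    rwa [sum_filter]
  obtain ⟨w, hw0, hwsymm, hpair⟩ :=
    exists_symmetric_flux_pairing_eq_fin (x ∘ e.symm) (v ∘ e.symm)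
      ((e.symm.sum_comp v).trans hv) hcut'
  have hflux : ∀ a, flux (fun i j => w (e i) (e j)) x (e.symm a) = flux w (x ∘ e.symm) a :=
    fun a => by
      simpa [Function.comp_assoc] using flux_comp_equiv e w (x ∘ e.symm) (e.symm a)
  refine ⟨fun i j => w (e i) (e j), fun i j => hw0 _ _, fun i j => hwsymm _ _, fun g => ?_⟩
  rw [← e.symm.sum_comp, ← e.symm.sum_comp]
  simp only [hflux]
  exact hpair g

section MasterEquation

variable {ι : Type*} [Fintype ι] [DecidableEq ι]

def masterVelocity (q : ι → ι → ℝ) (p : ι → ℝ) (i : ι) : ℝ :=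
  ∑ j ∈ univ.filter (· ≠ i), (q i j * p j - q j i * p i)

def IsBalanced (q : ι → ι → ℝ) (pstar : ι → ℝ) : Prop :=
  ∀ i, ∑ j ∈ univ.filter (· ≠ i), q i j * pstar j =
    (∑ j ∈ univ.filter (· ≠ i), q j i) * pstar i

def IsDetailedBalanced (q : ι → ι → ℝ) (pstar : ι → ℝ) : Prop :=
  ∀ i j, i ≠ j → q i j * pstar j = q j i * pstar i

theorem IsBalanced.sum_mul_eq {q : ι → ι → ℝ} {pstar : ι → ℝ} (hbal : IsBalanced q pstar)
    (i : ι) : ∑ j, q i j * pstar j = ∑ j, q j i * pstar i := by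
  have := hbal i
  rw [filter_ne', sum_mul] at this
  rw [← sum_erase_add _ _ (mem_univ i), ← sum_erase_add _ (fun j => q j i * pstar i) (mem_univ i),
    this]

theorem IsDetailedBalanced.isBalanced {q : ι → ι → ℝ} {pstar : ι → ℝ}
    (hdb : IsDetailedBalanced q pstar) : IsBalanced q pstar := fun i => by
  rw [sum_mul]
  exact sum_congr rfl fun j hj => hdb i j (mem_filter.1 hj).2.symm

theorem masterVelocity_eq_flux {q : ι → ι → ℝ} {pstar : ι → ℝ} (hbal : IsBalanced q pstar)
    (hpstar : ∀ i, pstar i ≠ 0) (p : ι → ℝ) (i : ι) :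
    masterVelocity q p i = flux (fun i j => q i j * pstar j) (fun j => p j / pstar j) i := by
  rw [masterVelocity, filter_ne', sum_erase _ (sub_self _), flux]
  calc ∑ j, (q i j * p j - q j i * p i)
      = ∑ j, q i j * pstar j * (p j / pstar j) - (∑ j, q j i * pstar i) * (p i / pstar i) := by
        rw [sum_mul, ← sum_sub_distrib]
        refine sum_congr rfl fun j _ => ?_
        field_simp [hpstar i, hpstar j]
    _ = _ := by
        rw [← hbal.sum_mul_eq i, sum_mul, ← sum_sub_distrib]
        simp only [mul_sub]

end MasterEquation

theorem csiszar_morimoto_derivative_matching_general (n : ℕ) (q : Fin n → Fin n → ℝ)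
    (pstar p : Fin n → ℝ) (hpstar : ∀ i, 0 < pstar i)
    (hq : ∀ i j, i ≠ j → 0 ≤ q i j)
    (hbal : ∀ i, ∑ j ∈ Finset.univ.filter (· ≠ i), q i j * pstar j =
      (∑ j ∈ Finset.univ.filter (· ≠ i), q j i) * pstar i) :
    ∃ q' : Fin n → Fin n → ℝ,
      (∀ i j, i ≠ j → 0 ≤ q' i j) ∧
      (∀ i j, i ≠ j → q' i j * pstar j = q' j i * pstar i) ∧
      ∀ h h' : ℝ → ℝ, ConvexOn ℝ (Set.Ioi 0) h →
        (∀ x : ℝ, 0 < x → HasDerivAt h (h' x) x) →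
        ∑ i, h' (p i / pstar i) *
          (∑ j ∈ Finset.univ.filter (· ≠ i), (q i j * p j - q j i * p i)) =
        ∑ i, h' (p i / pstar i) *
          (∑ j ∈ Finset.univ.filter (· ≠ i), (q' i j * p j - q' j i * p i)) := by
  have hpstar' : ∀ i, pstar i ≠ 0 := fun i => (hpstar i).ne'
  set x : Fin n → ℝ := fun i => p i / pstar i
  set u : Fin n → Fin n → ℝ := fun i j => q i j * pstar j
  have hcirc : ∀ i, ∑ j, u i j = ∑ j, u j i := IsBalanced.sum_mul_eq hbal
  have hu : ∀ i j, i ≠ j → 0 ≤ u i j := fun i j hij => mul_nonneg (hq i j hij) (hpstar j).le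
  obtain ⟨w, hw0, hwsymm, hpair⟩ := exists_symmetric_flux_pairing_eq x (flux u x)
    (sum_flux_eq_zero hcirc x) (sum_filter_le_flux_nonneg hu hcirc x)
  set q' : Fin n → Fin n → ℝ := fun i j => w i j / pstar j
  have hdb : IsDetailedBalanced q' pstar := fun i j _ => by
    simp only [q', div_mul_cancel₀ _ (hpstar' _), hwsymm i j]
  have hv : masterVelocity q p = flux u x := funext (masterVelocity_eq_flux hbal hpstar' p)
  have hv' : masterVelocity q' p = flux w x := by
    funext i
    rw [masterVelocity_eq_flux hdb.isBalanced hpstar']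
    simp only [q', div_mul_cancel₀ _ (hpstar' _)]
    rfl
  refine ⟨q', fun i j _ => div_nonneg (hw0 i j) (hpstar j).le, hdb, fun h h' _ _ => ?_⟩
  change ∑ i, h' (x i) * masterVelocity q p i = ∑ i, h' (x i) * masterVelocity q' p i
  rw [hv, hv', hpair]

/-- For every Markov process with positive equilibrium `P*` and every
distribution `P ≠ P*`, there is a Markov process with detailed balance and the
same equilibrium whose time derivative of every Csiszár–Morimoto divergence
`H_h(P‖P*)` at `P` coincides with that of the original process. -/
theorem csiszar_morimoto_derivative_matching (n : ℕ) (q : Fin n → Fin n → ℝ)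
    (pstar p : Fin n → ℝ) (hpstar : ∀ i, 0 < pstar i)
    (hpstarsum : ∑ i, pstar i = 1)
    (hp : ∀ i, 0 ≤ p i) (hpsum : ∑ i, p i = 1) (hne : p ≠ pstar)
    (hq : ∀ i j, i ≠ j → 0 ≤ q i j)
    (hbal : ∀ i, ∑ j ∈ Finset.univ.filter (· ≠ i), q i j * pstar j =
      (∑ j ∈ Finset.univ.filter (· ≠ i), q j i) * pstar i) :
    ∃ q' : Fin n → Fin n → ℝ,
      (∀ i j, i ≠ j → 0 ≤ q' i j) ∧
      (∀ i j, i ≠ j → q' i j * pstar j = q' j i * pstar i) ∧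
      ∀ h h' : ℝ → ℝ, ConvexOn ℝ (Set.Ioi 0) h →
        (∀ x : ℝ, 0 < x → HasDerivAt h (h' x) x) →
        ∑ i, h' (p i / pstar i) *
          (∑ j ∈ Finset.univ.filter (· ≠ i), (q i j * p j - q j i * p i)) =
        ∑ i, h' (p i / pstar i) *
          (∑ j ∈ Finset.univ.filter (· ≠ i), (q' i j * p j - q' j i * p i)) :=
  csiszar_morimoto_derivative_matching_general n q pstar p hpstar hq hbal
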